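/- Let μ be a multiplication on A, with symmetric part ρ(x,y) = μ(x,y) + μ(y,x) and skew-symmetric part ψ(x,y) = μ(x,y) − μ(y,x). Then A_μ(x,y,z) = A_μ(z,y,x) holds for all x,y,z ∈ A if and only if ρ(x,ρ(y,z)) − ρ(ρ(x,y),z) = ψ(y,ψ(z,x)) holds for all x,y,z ∈ A; moreover, either condition implies that ψ satisfies the Jacobi identity. -/

import Mathlib

/-- The associator of a bilinear multiplication. -/
def assocMap {K A : Type*} [Field K] [AddCommGroup A] [Module K A]
    (μ : A →ₗ[K] A →ₗ[K] A) (x y z : A) : A :=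
  μ x (μ y z) - μ (μ x y) z

/-- The symmetric part of a bilinear multiplication. -/
def symPart {K A : Type*} [Field K] [AddCommGroup A] [Module K A]
    (μ : A →ₗ[K] A →ₗ[K] A) (x y : A) : A :=
  μ x y + μ y x

/-- The skew-symmetric part of a bilinear multiplication. -/
def skewPart {K A : Type*} [Field K] [AddCommGroup A] [Module K A]
    (μ : A →ₗ[K] A →ₗ[K] A) (x y : A) : A :=
  μ x y - μ y x

/-!
Everything reduces to three polynomial identities in `μ`. Write `D(x,y,z) = A_μ(x,y,z) − A_μ(z,y,x)`.
Expanding `ρ` and `ψ`, the defect `ρ(x,ρ(y,z)) − ρ(ρ(x,y),z) − ψ(y,ψ(z,x))` equals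
`D(x,y,z) + D(x,z,y) + D(y,x,z)`, while the Jacobiator of `ψ` equals `D(x,y,z) − D(x,z,y) − D(y,x,z)`;
so `D = 0` forces both the `ρ`-identity and the Jacobi identity. Conversely `2 D(x,y,z)` is the sum
of the `ρ`-defects at `(x,z,y)` and `(y,x,z)`, and `2` is invertible in `K`.
-/

section Polarization

variable {K A : Type*} [Field K] [AddCommGroup A] [Module K A] (μ : A →ₗ[K] A →ₗ[K] A)

theorem symPart_symPart_sub_sub_skewPart_skewPart (x y z : A) :
    symPart μ x (symPart μ y z) - symPart μ (symPart μ x y) z - skewPart μ y (skewPart μ z x) =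
      (assocMap μ x y z - assocMap μ z y x) + (assocMap μ x z y - assocMap μ y z x) +
        (assocMap μ y x z - assocMap μ z x y) := by
  simp only [assocMap, symPart, skewPart, map_add, map_sub, LinearMap.add_apply,
    LinearMap.sub_apply]
  abel

theorem skewPart_jacobi_eq (x y z : A) :
    skewPart μ x (skewPart μ y z) + skewPart μ y (skewPart μ z x) +
        skewPart μ z (skewPart μ x y) =
      (assocMap μ x y z - assocMap μ z y x) - (assocMap μ x z y - assocMap μ y z x) -
        (assocMap μ y x z - assocMap μ z x y) := by
  simp only [assocMap, skewPart, map_sub, LinearMap.sub_apply]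
  abel

theorem two_smul_assocMap_sub_assocMap (x y z : A) :
    (2 : K) • (assocMap μ x y z - assocMap μ z y x) =
      (symPart μ x (symPart μ z y) - symPart μ (symPart μ x z) y -
          skewPart μ z (skewPart μ y x)) +
        (symPart μ y (symPart μ x z) - symPart μ (symPart μ y x) z -
          skewPart μ x (skewPart μ z y)) := by
  simp only [two_smul, assocMap, symPart, skewPart, map_add, map_sub, LinearMap.add_apply,
    LinearMap.sub_apply]
  abel

variable {μ}

theorem symPart_symPart_sub_eq_skewPart_skewPart_of_assocMap_symm
    (h : ∀ x y z : A, assocMap μ x y z = assocMap μ z y x) (x y z : A) :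
    symPart μ x (symPart μ y z) - symPart μ (symPart μ x y) z =
      skewPart μ y (skewPart μ z x) := by
  rw [← sub_eq_zero, symPart_symPart_sub_sub_skewPart_skewPart, h x y z, h x z y, h y x z]
  simp only [sub_self, add_zero]

theorem skewPart_jacobi_of_assocMap_symm
    (h : ∀ x y z : A, assocMap μ x y z = assocMap μ z y x) (x y z : A) :
    skewPart μ x (skewPart μ y z) + skewPart μ y (skewPart μ z x) +
      skewPart μ z (skewPart μ x y) = 0 := by
  rw [skewPart_jacobi_eq, h x y z, h x z y, h y x z]
  simp only [sub_self]

theorem assocMap_symm_of_symPart_symPart_sub_eq_skewPart_skewPart [NeZero (2 : K)]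
    (h : ∀ x y z : A, symPart μ x (symPart μ y z) - symPart μ (symPart μ x y) z =
      skewPart μ y (skewPart μ z x)) (x y z : A) :
    assocMap μ x y z = assocMap μ z y x := by
  have h2 : (2 : K) • (assocMap μ x y z - assocMap μ z y x) = 0 := by
    rw [two_smul_assocMap_sub_assocMap, sub_eq_zero_of_eq (h x z y), sub_eq_zero_of_eq (h y x z),
      add_zero]
  exact sub_eq_zero.mp ((smul_eq_zero.mp h2).resolve_left two_ne_zero)

end Polarization

/-- `A_μ(x,y,z) = A_μ(z,y,x)` for all `x,y,z` iff
`ρ(x,ρ(y,z)) − ρ(ρ(x,y),z) = ψ(y,ψ(z,x))` for all `x,y,z`; moreover either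
condition implies that `ψ` satisfies the Jacobi identity. -/
theorem tau13_polarization {K A : Type*} [Field K] [CharZero K]
    [AddCommGroup A] [Module K A]
    (μ : A →ₗ[K] A →ₗ[K] A) :
    ((∀ x y z : A, assocMap μ x y z = assocMap μ z y x) ↔
      (∀ x y z : A,
        symPart μ x (symPart μ y z) - symPart μ (symPart μ x y) z =
          skewPart μ y (skewPart μ z x))) ∧
    ((∀ x y z : A, assocMap μ x y z = assocMap μ z y x) →
      (∀ x y z : A,
        skewPart μ x (skewPart μ y z) + skewPart μ y (skewPart μ z x) +
          skewPart μ z (skewPart μ x y) = 0)) ∧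
    ((∀ x y z : A,
        symPart μ x (symPart μ y z) - symPart μ (symPart μ x y) z =
          skewPart μ y (skewPart μ z x)) →
      (∀ x y z : A,
        skewPart μ x (skewPart μ y z) + skewPart μ y (skewPart μ z x) +
          skewPart μ z (skewPart μ x y) = 0)) :=
  ⟨⟨symPart_symPart_sub_eq_skewPart_skewPart_of_assocMap_symm,
      assocMap_symm_of_symPart_symPart_sub_eq_skewPart_skewPart⟩,
    skewPart_jacobi_of_assocMap_symm,
    fun h => skewPart_jacobi_of_assocMap_symm
      (assocMap_symm_of_symPart_symPart_sub_eq_skewPart_skewPart h)⟩
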